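/- Let n ≥ 2. Then, as maps ℝ^n → ℝ^n with the type C_n simple reflections, the composite s_n ∘ (s_{n−1} ∘ s_n) ∘ (s_{n−2} ∘ s_{n−1} ∘ s_n) ∘ ⋯ ∘ (s_1 ∘ s_2 ∘ ⋯ ∘ s_n) — i.e. the product of the blocks [m, n] for m = n, n−1, …, 1, applied right-to-left — equals the map x = (x_1, …, x_n) ↦ (−x_n, −x_{n−1}, …, −x_1). Equivalently, in the Weyl group W(C_n), s_n[n−1,n][n−2,n]⋯[1,n] = w_0 w_n, where w_0 = −id is the longest element of W(C_n) and w_n is the coordinate-reversing permutation, the longest element of the parabolic subgroup generated by s_1, …, s_{n−1}. (This is the identity underlying the reduced expression ω_n = π_n s_n[n−1,n]⋯[1,n] in the extended affine Weyl group of type C_n^{(1)}.) -/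

import Mathlib

/-!
The block `[m,n]` negates the last coordinate and moves it to position `m`, shifting the
coordinates in positions `m, …, n-1` one place up. Hence after `[1,n]`, then `[2,n]`, …, then
`[t,n]` a vector `x` has become `(-xₙ, …, -x_{n-t+1}, x₁, …, x_{n-t})`; for `t = n` this is the
reversed and negated vector.
-/

noncomputable section

/-- Value of `x : ℝ^n` at the natural (0-indexed) index `m`, or `0` if out of range. -/
def xval {n : ℕ} (x : Fin n → ℝ) (m : ℕ) : ℝ := if h : m < n then x ⟨m, h⟩ else 0

/-- The simple reflections of the Weyl group of type `C_n` acting on `ℝ^n`: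
for `1 ≤ j ≤ n-1`, `sC n j` swaps the `j`-th and `(j+1)`-th coordinates (1-indexed);
`sC n n` negates the last coordinate. -/
def sC (n : ℕ) (j : ℕ) (x : Fin n → ℝ) (k : Fin n) : ℝ :=
  if j = n then
    if (k : ℕ) = n - 1 then -x k else x k
  else
    if (k : ℕ) = j - 1 then xval x j
    else if (k : ℕ) = j then xval x (j - 1)
    else x k

/-- The block `[m,n] = s_m ∘ s_{m+1} ∘ ⋯ ∘ s_n` (rightmost factor applied first). -/
def blkC (n k l : ℕ) : (Fin n → ℝ) → (Fin n → ℝ) :=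
  (List.range' k (l + 1 - k)).foldr (fun j f => sC n j ∘ f) id

theorem blkC_self (n : ℕ) : blkC n n n = sC n n := by
  simp [blkC]

theorem blkC_eq_sC_comp {n m : ℕ} (hmn : m < n) : blkC n m n = sC n m ∘ blkC n (m + 1) n := by
  rw [blkC, blkC, show n + 1 - m = n + 1 - (m + 1) + 1 by omega, List.range'_succ, List.foldr_cons]

theorem blkC_apply {n m : ℕ} (hm : 1 ≤ m) (hmn : m ≤ n) (x : Fin n → ℝ) (k : Fin n) :
    blkC n m n x k = if (k : ℕ) < m - 1 then x k
      else if (k : ℕ) = m - 1 then -x ⟨n - 1, by omega⟩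
      else x ⟨(k : ℕ) - 1, by omega⟩ := by
  induction h : n - m generalizing m k with
  | zero =>
    obtain rfl : m = n := by omega
    rw [blkC_self, sC]
    split_ifs <;> grind
  | succ d ih =>
    rw [blkC_eq_sC_comp (by omega), Function.comp_apply, sC, if_neg (by omega)]
    have shifted := fun j => ih (m := m + 1) (by omega) (by omega) j (by omega)
    simp only [xval, dif_pos (show m < n by omega), dif_pos (show m - 1 < n by omega), shifted]
    split_ifs <;> grind

def blkProdC (n t : ℕ) : (Fin n → ℝ) → (Fin n → ℝ) :=
  ((List.range' 1 t).reverse).foldr (fun m f => blkC n m n ∘ f) id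

theorem blkProdC_succ (n t : ℕ) : blkProdC n (t + 1) = blkC n (t + 1) n ∘ blkProdC n t := by
  simp [blkProdC, List.range'_concat, add_comm]

theorem blkProdC_apply {n t : ℕ} (ht : t ≤ n) (x : Fin n → ℝ) (k : Fin n) :
    blkProdC n t x k = if (k : ℕ) < t then -x ⟨n - 1 - (k : ℕ), by omega⟩
      else x ⟨(k : ℕ) - t, by omega⟩ := by
  induction t generalizing k with
  | zero => simp [blkProdC]
  | succ t ih =>
    rw [blkProdC_succ, Function.comp_apply, blkC_apply (by omega) ht]
    simp only [ih (by omega), add_tsub_cancel_right]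
    split_ifs <;> grind

/-- In the Weyl group of type `C_n`, the composite `sₙ ∘ [n−1,n] ∘ [n−2,n] ∘ ⋯ ∘ [1,n]`
(the product of the blocks `[m,n]` for `m = n, n−1, …, 1`, applied right-to-left)
equals `x ↦ (−xₙ, −x_{n−1}, …, −x₁)`. -/
theorem statement19 (n : ℕ) :
    ((List.range' 1 n).reverse).foldr (fun m f => blkC n m n ∘ f) id
      = fun x (k : Fin n) => -x ⟨n - 1 - (k : ℕ), by have := k.isLt; omega⟩ := by
  funext x k
  exact (blkProdC_apply le_rfl x k).trans (if_pos k.isLt)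

end
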